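/- Let A be an m×n complex matrix and B an n×p complex matrix. If H is a {1}-inverse of ABB* (i.e. (ABB*)H(ABB*) = ABB*), then B*·H is a {1}-inverse of AB: (AB)(B*H)(AB) = AB. -/

import Mathlib

open Matrix

namespace Matrix

variable {l m n p R : Type*}

/-- `X` is a {1}-inverse (inner inverse) of `M`. -/
def IsInnerInverse [Fintype m] [Fintype n] [NonUnitalNonAssocSemiring R]
    (M : Matrix m n R) (X : Matrix n m R) : Prop :=
  M * X * M = M

variable [PartialOrder R] [NonUnitalRing R] [StarRing R] [StarOrderedRing R] [NoZeroDivisors R]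

lemma mul_self_mul_conjTranspose_eq_iff [Fintype n] [Fintype p] (B : Matrix n p R)
    (X Y : Matrix l n R) :
    X * (B * Bᴴ) = Y * (B * Bᴴ) ↔ X * B = Y * B := by
  rw [← sub_eq_zero, ← Matrix.sub_mul, mul_self_mul_conjTranspose_eq_zero, Matrix.sub_mul,
    sub_eq_zero]

/-- Cancelling `Bᴴ` on the right is possible because `Y * (B * Bᴴ) = 0` forces `Y * B = 0`. -/
lemma IsInnerInverse.of_mul_mul_conjTranspose [Fintype l] [Fintype n] [Fintype p]
    {A : Matrix l n R} {B : Matrix n p R} {H : Matrix n l R}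
    (hH : IsInnerInverse (A * B * Bᴴ) H) :
    IsInnerInverse (A * B) (Bᴴ * H) := by
  have key : A * B * Bᴴ * H * A * (B * Bᴴ) = A * (B * Bᴴ) := by
    simpa only [IsInnerInverse, Matrix.mul_assoc] using hH
  rw [mul_self_mul_conjTranspose_eq_iff] at key
  simpa only [IsInnerInverse, Matrix.mul_assoc] using key

end Matrix

theorem stmt_3 {m n p : ℕ}
    (A : Matrix (Fin m) (Fin n) ℂ) (B : Matrix (Fin n) (Fin p) ℂ)
    (H : Matrix (Fin n) (Fin m) ℂ)
    (hH : (A * B * Bᴴ) * H * (A * B * Bᴴ) = A * B * Bᴴ) :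
    (A * B) * (Bᴴ * H) * (A * B) = A * B := by
  open scoped ComplexOrder in
  exact IsInnerInverse.of_mul_mul_conjTranspose hH
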